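/- arXiv:1312.1930 — 5 statements merged into one kernel-verified Lean document; each statement's English description precedes it below -/
import Mathlib

section
/- If z = x + iy lies in the closure of the standard fundamental domain, i.e. |z| ≥ 1 and -1/2 ≤ x ≤ 1/2, if E₂(z) ≠ 0, and if h(z) is real, then |y - 6/π| < 0.000283. -/
open Complex Real

/-!
If `h(z)` is real then, since `Im (6/(πi) · w) = -(6/π) Re w`, we get `y = (6/π) Re (1/E₂(z))`.
With `q = e^{-2πy}` and `σ₁(n+1) ≤ (n+1)² ≤ 4ⁿ`, the `q`-expansion gives
`|E₂(z) - 1| ≤ 24q/(1 - 4q)`, hence `|1/E₂(z) - 1| ≤ 24q/(1 - 28q)` and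
`|y - 6/π| ≤ (6/π) · 24q/(1 - 28q)`. Starting from `y ≥ √3/2` on the fundamental domain,
each such bound pushes `y` closer to `6/π`, hence `q` closer to `e^{-12}`; four rounds reach
`(6/π) · 24 e^{-12} ≈ 0.0002817`.
-/

/-- The weight 2 Eisenstein series `E₂(z) = 1 - 24 ∑_{n≥1} σ₁(n) e^{2πinz}`. -/
noncomputable def E₂ (z : ℂ) : ℂ :=
  1 - 24 * ∑' n : ℕ, (ArithmeticFunction.sigma 1 (n + 1) : ℂ) *
    Complex.exp (2 * (Real.pi : ℂ) * Complex.I * ((n : ℂ) + 1) * z)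

/-- The equivariant function `h(z) = z + (6/(πi))/E₂(z)`. -/
noncomputable def h (z : ℂ) : ℂ := z + (6 / ((Real.pi : ℂ) * Complex.I)) / E₂ z

lemma h_im (z : ℂ) : (h z).im = z.im - 6 / π * (E₂ z)⁻¹.re := by
  have hπ : (π : ℂ) ≠ 0 := ofReal_ne_zero.mpr pi_ne_zero
  have h6 : (6 : ℂ) / (π * I) / E₂ z = -((6 / π : ℝ) : ℂ) * (I * (E₂ z)⁻¹) := by
    push_cast
    field_simp
    rw [I_sq]
    ring
  rw [h, h6]
  simp [mul_im]
  ring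

lemma sigma_one_succ_le_four_pow (n : ℕ) : ArithmeticFunction.sigma 1 (n + 1) ≤ 4 ^ n :=
  calc ArithmeticFunction.sigma 1 (n + 1) ≤ (n + 1) ^ 2 :=
        ArithmeticFunction.sigma_le_pow_succ 1 (n + 1)
    _ ≤ (2 ^ n) ^ 2 := Nat.pow_le_pow_left n.lt_two_pow_self 2
    _ = 4 ^ n := by rw [← pow_mul, mul_comm, pow_mul]; norm_num

lemma norm_cexp_two_pi_I_mul (n : ℕ) (z : ℂ) :
    ‖cexp (2 * π * I * (n + 1) * z)‖ = rexp (-(2 * π * z.im)) ^ (n + 1) := by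
  rw [norm_exp, ← Real.exp_nat_mul]
  congr 1
  have : 2 * π * I * (n + 1) * z = ((2 * π * (n + 1) : ℝ) : ℂ) * (I * z) := by
    push_cast
    ring
  rw [this, re_ofReal_mul, I_mul_re]
  push_cast
  ring

lemma norm_E₂_sub_one_le {z : ℂ} {ρ : ℝ} (hρ : rexp (-(2 * π * z.im)) ≤ ρ) (h4 : 4 * ρ < 1) :
    ‖E₂ z - 1‖ ≤ 24 * ρ / (1 - 4 * ρ) := by
  have hρ0 : 0 ≤ ρ := (exp_pos _).le.trans hρ
  have hterm (n : ℕ) : ‖(ArithmeticFunction.sigma 1 (n + 1) : ℂ) *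
      cexp (2 * π * I * (n + 1) * z)‖ ≤ ρ * (4 * ρ) ^ n := by
    rw [norm_mul, Complex.norm_natCast, norm_cexp_two_pi_I_mul]
    calc (ArithmeticFunction.sigma 1 (n + 1) : ℝ) * rexp (-(2 * π * z.im)) ^ (n + 1)
        ≤ 4 ^ n * ρ ^ (n + 1) := by
          gcongr
          exact_mod_cast sigma_one_succ_le_four_pow n
      _ = ρ * (4 * ρ) ^ n := by ring
  have hsum : HasSum (fun n : ℕ ↦ ρ * (4 * ρ) ^ n) (ρ * (1 - 4 * ρ)⁻¹) :=
    (hasSum_geometric_of_lt_one (by positivity) h4).mul_left ρ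
  have hE : E₂ z - 1 = -(24 * ∑' n : ℕ, (ArithmeticFunction.sigma 1 (n + 1) : ℂ) *
      cexp (2 * π * I * (n + 1) * z)) := by
    rw [E₂]
    ring
  rw [hE, norm_neg, norm_mul, RCLike.norm_ofNat, mul_div_assoc, div_eq_mul_inv]
  gcongr
  exact tsum_of_norm_bounded hsum hterm

lemma norm_inv_sub_one_le {𝕜 : Type*} [NormedDivisionRing 𝕜] {w : 𝕜} {D : ℝ}
    (hw : ‖w - 1‖ ≤ D) (hD : D < 1) : ‖w⁻¹ - 1‖ ≤ D / (1 - D) := by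
  have hw_norm : 1 - D ≤ ‖w‖ := by
    have := norm_sub_norm_le (1 : 𝕜) w
    rw [norm_one, norm_sub_rev] at this
    linarith
  have hw0 : w ≠ 0 := norm_pos_iff.mp (by linarith)
  have : w⁻¹ - 1 = w⁻¹ * -(w - 1) := by
    rw [mul_neg, mul_sub, inv_mul_cancel₀ hw0, mul_one]
    abel
  rw [this, norm_mul, norm_inv, norm_neg, inv_mul_eq_div]
  exact div_le_div₀ ((norm_nonneg _).trans hw) hw (by linarith) hw_norm

lemma abs_im_sub_six_div_pi_le {z : ℂ} (hreal : (h z).im = 0) {ρ : ℝ}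
    (hρ : rexp (-(2 * π * z.im)) ≤ ρ) (h28 : 28 * ρ < 1) :
    |z.im - 6 / π| ≤ 6 / π * (24 * ρ / (1 - 28 * ρ)) := by
  have hρ0 : 0 ≤ ρ := (exp_pos _).le.trans hρ
  have hD : 24 * ρ / (1 - 4 * ρ) < 1 := by
    rw [div_lt_one (by linarith)]
    linarith
  have hD' : 24 * ρ / (1 - 4 * ρ) / (1 - 24 * ρ / (1 - 4 * ρ)) = 24 * ρ / (1 - 28 * ρ) := by
    have h4 : 1 - 4 * ρ ≠ 0 := by linarith
    rw [one_sub_div h4, div_div_div_cancel_right₀ h4]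
    ring_nf
  have hinv := norm_inv_sub_one_le (norm_E₂_sub_one_le hρ (by linarith)) hD
  rw [hD'] at hinv
  have hy : z.im - 6 / π = 6 / π * ((E₂ z)⁻¹ - 1).re := by
    rw [sub_re, one_re]
    linarith [h_im z]
  rw [hy, abs_mul, abs_of_pos (by positivity)]
  gcongr
  exact (abs_re_le_norm _).trans hinv

lemma pow_mul_one_add_sub_le_exp (n : ℕ) (t : ℝ) :
    (2.7182818283 : ℝ) ^ n * (1 + t - n) ≤ rexp t := by
  rcases lt_or_ge (1 + t - n) 0 with hneg | hnonneg
  · exact (mul_neg_of_pos_of_neg (by positivity) hneg).le.trans (exp_pos t).le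
  calc (2.7182818283 : ℝ) ^ n * (1 + t - n) ≤ rexp 1 ^ n * rexp (t - n) := by
        gcongr
        · exact exp_one_gt_d9.le
        · linarith [add_one_le_exp (t - n)]
    _ = rexp t := by rw [← Real.exp_nat_mul, ← Real.exp_add]; ring_nf

lemma abs_im_sub_six_div_pi_le_of_le_im {z : ℂ} (hreal : (h z).im = 0) {c : ℝ}
    (hc0 : 0 ≤ c) (hc : c ≤ z.im) (n : ℕ) {ρ B : ℝ} (hρ0 : 0 ≤ ρ)
    (hρ : 1 ≤ ρ * ((2.7182818283 : ℝ) ^ n * (1 + 2 * 3.141592 * c - n)))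
    (h28 : 28 * ρ < 1) (hB : 6 / 3.141592 * (24 * ρ / (1 - 28 * ρ)) ≤ B) :
    |z.im - 6 / π| ≤ B := by
  set K := (2.7182818283 : ℝ) ^ n * (1 + 2 * 3.141592 * c - n)
  have hK : K ≤ rexp (2 * π * z.im) := by
    refine le_trans ?_ (pow_mul_one_add_sub_le_exp n _)
    have : 2 * 3.141592 * c ≤ 2 * π * z.im := by gcongr; exact pi_gt_d6.le
    exact mul_le_mul_of_nonneg_left (by linarith) (by positivity)
  have hq : rexp (-(2 * π * z.im)) ≤ ρ := by
    rw [Real.exp_neg, inv_le_iff_one_le_mul₀ (exp_pos _)]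
    nlinarith
  have hρ' : 0 ≤ 24 * ρ / (1 - 28 * ρ) := div_nonneg (by positivity) (by linarith)
  calc |z.im - 6 / π| ≤ 6 / π * (24 * ρ / (1 - 28 * ρ)) := abs_im_sub_six_div_pi_le hreal hq h28
    _ ≤ 6 / 3.141592 * (24 * ρ / (1 - 28 * ρ)) := by gcongr; exact pi_gt_d6.le
    _ ≤ B := hB

lemma le_im_of_abs_im_sub_six_div_pi_le {z : ℂ} {B : ℝ} (hB : |z.im - 6 / π| ≤ B) :
    1.909858 - B ≤ z.im := by
  have : (1.909858 : ℝ) ≤ 6 / π := by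
    rw [le_div_iff₀ pi_pos]
    nlinarith [pi_lt_d6]
  linarith [(abs_le.mp hB).1]

lemma three_le_four_mul_im_sq {z : ℂ} (habs : 1 ≤ ‖z‖) (hre : |z.re| ≤ 1 / 2) :
    3 ≤ 4 * z.im ^ 2 := by
  have h1 : 1 ≤ z.re * z.re + z.im * z.im := by
    rw [← normSq_apply, ← Complex.sq_norm]
    nlinarith [norm_nonneg z]
  have h2 : z.re * z.re ≤ 1 / 4 := by nlinarith [abs_le.mp hre]
  nlinarith

theorem stmt_1_general (z : ℂ) (hz : 0 < z.im) (habs : 1 ≤ ‖z‖)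
    (hre : |z.re| ≤ 1 / 2) (hreal : (h z).im = 0) :
    |z.im - 6 / Real.pi| < 0.000283 := by
  have hy : (0.866 : ℝ) ≤ z.im := by nlinarith [three_le_four_mul_im_sq habs hre]
  have hB₁ : |z.im - 6 / π| ≤ 0.247 :=
    abs_im_sub_six_div_pi_le_of_le_im hreal (by norm_num) hy 5 (ρ := 0.00468)
      (by norm_num) (by norm_num) (by norm_num) (by norm_num)
  have hB₂ : |z.im - 6 / π| ≤ 0.00144 :=
    abs_im_sub_six_div_pi_le_of_le_im hreal (by norm_num)
      (le_im_of_abs_im_sub_six_div_pi_le hB₁) 10 (ρ := 3.136e-5)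
      (by norm_num) (by norm_num) (by norm_num) (by norm_num)
  have hB₃ : |z.im - 6 / π| ≤ 0.0002843 :=
    abs_im_sub_six_div_pi_le_of_le_im hreal (by norm_num)
      (le_im_of_abs_im_sub_six_div_pi_le hB₂) 12 (ρ := 6.201e-6)
      (by norm_num) (by norm_num) (by norm_num) (by norm_num)
  have hB₄ : |z.im - 6 / π| ≤ 0.0002822 :=
    abs_im_sub_six_div_pi_le_of_le_im hreal (by norm_num)
      (le_im_of_abs_im_sub_six_div_pi_le hB₃) 12 (ρ := 6.1553e-6)
      (by norm_num) (by norm_num) (by norm_num) (by norm_num)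
  linarith

/-- if z lies in the closure of the standard fundamental domain, E₂(z) ≠ 0,
and h(z) is real, then |Im z - 6/π| < 0.000283. -/
theorem stmt_1 (z : ℂ) (hz : 0 < z.im) (habs : 1 ≤ ‖z‖)
    (hre : |z.re| ≤ 1 / 2) (hE : E₂ z ≠ 0) (hreal : (h z).im = 0) :
    |z.im - 6 / Real.pi| < 0.000283 :=
  stmt_1_general z hz habs hre hreal
end

section
/- Let z = x + iy ∈ ℍ with y ≥ √3/2 and let N ≥ 1 be an integer. Then |E₂(z) - (1 - 24 ∑_{n ≤ N} σ₁(n) e^{2πinz})| ≤ 24 e^{-2πNy} (N²/(2πy) + 2N/(2πy)² + 2/(2πy)³). -/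
open Complex Real

/-!
With `t = 2π Im z`, the `n`-th term `σ₁(n) qⁿ` has norm at most `n² e^{-tn}` because
`σ₁(n) ≤ n²`. The function `s ↦ s² e^{-ts}` decreases on `[2/t, ∞)`, and `Im z ≥ √3/2` gives
`2/t ≤ 1 ≤ N`, so the tail `∑_{n>N} n² e^{-tn}` is at most
`∫_N^∞ s² e^{-ts} ds = e^{-tN} (N²/t + 2N/t² + 2/t³)`.
-/

open Finset

section SqMulExpNeg

variable {t : ℝ}

lemma hasDerivAt_antideriv_sq_mul_exp_neg (ht : t ≠ 0) (x : ℝ) :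
    HasDerivAt (fun s => -(rexp (-(t * s)) * (s ^ 2 / t + 2 * s / t ^ 2 + 2 / t ^ 3)))
      (x ^ 2 * rexp (-(t * x))) x := by
  have hexp : HasDerivAt (fun s => rexp (-(t * s))) (rexp (-(t * x)) * -t) x :=
    ((hasDerivAt_id x).const_mul t).neg.exp.congr_deriv (by simp)
  have hpoly : HasDerivAt (fun s => s ^ 2 / t + 2 * s / t ^ 2 + 2 / t ^ 3)
      (2 * x / t + 2 / t ^ 2) x :=
    ((((hasDerivAt_pow 2 x).div_const t).add
      (((hasDerivAt_id x).const_mul 2).div_const (t ^ 2))).add_const (2 / t ^ 3)).congr_deriv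
      (by simp)
  refine (hexp.mul hpoly).neg.congr_deriv ?_
  field_simp
  ring

lemma antitoneOn_sq_mul_exp_neg (ht : 0 < t) :
    AntitoneOn (fun s => s ^ 2 * rexp (-(t * s))) (Set.Ici (2 / t)) := by
  have hderiv (x : ℝ) : HasDerivAt (fun s => s ^ 2 * rexp (-(t * s)))
      (x * (2 - t * x) * rexp (-(t * x))) x :=
    ((hasDerivAt_pow 2 x).mul ((hasDerivAt_id x).const_mul t).neg.exp).congr_deriv
      (by simp; ring)
  refine antitoneOn_of_deriv_nonpos (convex_Ici _) (by fun_prop) (by fun_prop) fun x hx => ?_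
  rw [interior_Ici, Set.mem_Ioi, div_lt_iff₀ ht] at hx
  rw [(hderiv x).deriv]
  have hx0 : 0 < x := by nlinarith
  exact mul_nonpos_of_nonpos_of_nonneg
    (mul_nonpos_of_nonneg_of_nonpos hx0.le (by linarith)) (exp_pos _).le

lemma sum_range_sq_mul_exp_neg_le (ht : 0 < t) {x : ℝ} (hx : 2 / t ≤ x) (k : ℕ) :
    ∑ i ∈ range k, (x + ↑(i + 1)) ^ 2 * rexp (-(t * (x + ↑(i + 1))))
      ≤ rexp (-(t * x)) * (x ^ 2 / t + 2 * x / t ^ 2 + 2 / t ^ 3) := by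
  have hx0 : 0 ≤ x := (div_pos two_pos ht).le.trans hx
  calc _ ≤ ∫ s in x..x + k, s ^ 2 * rexp (-(t * s)) :=
        ((antitoneOn_sq_mul_exp_neg ht).mono
          (Set.Icc_subset_Ici_self.trans (Set.Ici_subset_Ici.2 hx))).sum_le_integral
    _ = rexp (-(t * x)) * (x ^ 2 / t + 2 * x / t ^ 2 + 2 / t ^ 3)
          - rexp (-(t * (x + k))) * ((x + k) ^ 2 / t + 2 * (x + k) / t ^ 2 + 2 / t ^ 3) := by
        rw [intervalIntegral.integral_eq_sub_of_hasDerivAt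
          (fun s _ => hasDerivAt_antideriv_sq_mul_exp_neg ht.ne' s)
          (Continuous.intervalIntegrable (by fun_prop) _ _)]
        ring
    _ ≤ _ := sub_le_self _ (by positivity)

lemma summable_sq_mul_exp_neg_nat_add (ht : 0 < t) {x : ℝ} (hx : 2 / t ≤ x) :
    Summable fun i : ℕ => (x + ↑(i + 1)) ^ 2 * rexp (-(t * (x + ↑(i + 1)))) :=
  summable_of_sum_range_le (fun _ => by positivity) (sum_range_sq_mul_exp_neg_le ht hx)

lemma tsum_sq_mul_exp_neg_nat_add_le (ht : 0 < t) {x : ℝ} (hx : 2 / t ≤ x) :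
    ∑' i : ℕ, (x + ↑(i + 1)) ^ 2 * rexp (-(t * (x + ↑(i + 1))))
      ≤ rexp (-(t * x)) * (x ^ 2 / t + 2 * x / t ^ 2 + 2 / t ^ 3) :=
  Real.tsum_le_of_sum_range_le (fun _ => by positivity) (sum_range_sq_mul_exp_neg_le ht hx)

end SqMulExpNeg

section QExpansion

open ArithmeticFunction
open scoped ArithmeticFunction.sigma

noncomputable def E₂Term (z : ℂ) (n : ℕ) : ℂ := (σ 1 n : ℂ) * cexp (2 * π * I * n * z)

lemma norm_E₂Term_le (z : ℂ) (n : ℕ) :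
    ‖E₂Term z n‖ ≤ (n : ℝ) ^ 2 * rexp (-(2 * π * z.im * n)) := by
  have hre : (2 * π * I * n * z).re = -(2 * π * z.im * n) := by
    simp [Complex.mul_re, Complex.mul_im]; ring
  rw [E₂Term, norm_mul, Complex.norm_exp, hre, Complex.norm_natCast]
  gcongr
  exact_mod_cast sigma_le_pow_succ 1 n

variable {z : ℂ} {N : ℕ}

lemma summable_E₂Term_nat_add (hz : 0 < z.im) (hN : 2 / (2 * π * z.im) ≤ N) :
    Summable fun i => E₂Term z (i + N + 1) := by
  refine (summable_sq_mul_exp_neg_nat_add (by positivity) hN).of_norm_bounded fun i => ?_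
  exact (norm_E₂Term_le z _).trans_eq (by push_cast; ring_nf)

lemma norm_tsum_E₂Term_nat_add_le (hz : 0 < z.im) (hN : 2 / (2 * π * z.im) ≤ N) :
    ‖∑' i, E₂Term z (i + N + 1)‖ ≤ rexp (-(2 * π * z.im * N)) *
      (N ^ 2 / (2 * π * z.im) + 2 * N / (2 * π * z.im) ^ 2 + 2 / (2 * π * z.im) ^ 3) := by
  refine (norm_tsum_le_tsum_norm (summable_E₂Term_nat_add hz hN).norm).trans <|
    (Summable.tsum_le_tsum (fun i => ?_) (summable_E₂Term_nat_add hz hN).norm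
      (summable_sq_mul_exp_neg_nat_add (by positivity) hN)).trans
      (tsum_sq_mul_exp_neg_nat_add_le (by positivity) hN)
  exact (norm_E₂Term_le z _).trans_eq (by push_cast; ring_nf)

lemma E₂_eq_one_sub_sum_Icc_add_tsum (hs : Summable fun i => E₂Term z (i + N + 1)) :
    E₂ z = 1 - 24 * (∑ n ∈ Icc 1 N, E₂Term z n + ∑' i, E₂Term z (i + N + 1)) := by
  have hE₂ : E₂ z = 1 - 24 * ∑' n : ℕ, E₂Term z (n + 1) := by
    simp [E₂, E₂Term]
  have hIcc : ∑ n ∈ Icc 1 N, E₂Term z n = ∑ n ∈ range N, E₂Term z (n + 1) := by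
    rw [← Finset.Ico_add_one_right_eq_Icc, Finset.sum_Ico_eq_sum_range]
    simp [add_comm]
  rw [hE₂, hIcc, ← ((summable_nat_add_iff (f := fun n => E₂Term z (n + 1)) N).mp hs
    ).sum_add_tsum_nat_add]

end QExpansion

/-- tail bound for the Fourier expansion of E₂. -/
theorem stmt_2 (z : ℂ) (hy : Real.sqrt 3 / 2 ≤ z.im) (N : ℕ) (hN : 1 ≤ N) :
    ‖E₂ z - (1 - 24 * ∑ n ∈ Finset.Icc 1 N,
        (ArithmeticFunction.sigma 1 n : ℂ) *
          Complex.exp (2 * (Real.pi : ℂ) * Complex.I * (n : ℂ) * z))‖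
      ≤ 24 * Real.exp (-2 * Real.pi * N * z.im) *
          ((N : ℝ) ^ 2 / (2 * Real.pi * z.im) + 2 * N / (2 * Real.pi * z.im) ^ 2 +
            2 / (2 * Real.pi * z.im) ^ 3) := by
  have hz : 0 < z.im := lt_of_lt_of_le (by positivity) hy
  have ht : 2 ≤ 2 * π * z.im := by
    have h3 : 1 ≤ √3 := Real.one_le_sqrt.mpr (by norm_num)
    nlinarith [pi_gt_three]
  have hN' : 2 / (2 * π * z.im) ≤ N :=
    ((div_le_one (by positivity)).2 ht).trans (by exact_mod_cast hN)
  have htail : E₂ z - (1 - 24 * ∑ n ∈ Icc 1 N, E₂Term z n)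
      = -(24 * ∑' i, E₂Term z (i + N + 1)) := by
    rw [E₂_eq_one_sub_sum_Icc_add_tsum (summable_E₂Term_nat_add hz hN')]
    ring
  change ‖E₂ z - (1 - 24 * ∑ n ∈ Icc 1 N, E₂Term z n)‖ ≤ _
  rw [htail, norm_neg, norm_mul, RCLike.norm_ofNat, mul_assoc,
    show -2 * π * N * z.im = -(2 * π * z.im * N) by ring]
  gcongr
  exact norm_tsum_E₂Term_nat_add_le hz hN'
end

section
/- For every real number r with -1/2 ≤ r ≤ 1/2, there exists exactly one z ∈ ℍ with Im z > 0.95, E₂(z) ≠ 0, and h(z) = r. In particular, h takes every rational value in [-1/2, 1/2] exactly once in this region. -/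
open Complex Real

/-!
For `Im z ≥ 0.95` the nome `q = e^{2πiz}` has `|q| ≤ 1/148`, and `σ₁(n) ≤ n² ≤ 4^{n-1}` turns the
`q`-series into a geometric one: `|E₂(z) - 1| ≤ 1/6`, hence `|1/E₂(z) - 1| ≤ 1/5`.
Since `6/(πi) = -(6/π) i`, for real `r` the equation `h z = r` says that `z` is a fixed point of
`hFixMap r z = r + (6/π) i / E₂(z)`, whose imaginary part is `(6/π) Re(1/E₂(z)) ≥ (6/π)(4/5) ≥ 3/2`.
So every solution lies in the closed half-plane `Im z ≥ 3/2`, which `hFixMap r` maps into itself.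
Cauchy's estimate on discs of radius `1/2` bounds the derivative of `1/E₂` there by `2/5`, so
`hFixMap r` is `4/5`-Lipschitz on that half-plane, and the Banach fixed point theorem gives exactly
one solution.
-/

open scoped ArithmeticFunction.sigma
open ArithmeticFunction Metric Set Function Function.Periodic

local notation "𝕢" => qParam

section PowerSeries

variable {𝕜 : Type*} [NormedField 𝕜] {a : ℕ → 𝕜} {K x : ℝ} {q : 𝕜}

lemma norm_mul_pow_succ_le (ha : ∀ n, ‖a n‖ ≤ K ^ n) (hq : ‖q‖ ≤ x) (n : ℕ) :
    ‖a n * q ^ (n + 1)‖ ≤ x * (K * x) ^ n := by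
  have hx : 0 ≤ x := (norm_nonneg q).trans hq
  calc ‖a n * q ^ (n + 1)‖ = ‖a n‖ * ‖q‖ ^ (n + 1) := by rw [norm_mul, norm_pow]
    _ ≤ K ^ n * x ^ (n + 1) := by
        gcongr
        exacts [(norm_nonneg _).trans (ha n), ha n]
    _ = x * (K * x) ^ n := by ring

lemma norm_tsum_mul_pow_succ_le (ha : ∀ n, ‖a n‖ ≤ K ^ n) (hq : ‖q‖ ≤ x) (hKx : K * x < 1) :
    ‖∑' n, a n * q ^ (n + 1)‖ ≤ x / (1 - K * x) := by
  have hK : 0 ≤ K := by simpa using (norm_nonneg _).trans (ha 1)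
  have hx : 0 ≤ x := (norm_nonneg q).trans hq
  rw [div_eq_mul_inv]
  exact tsum_of_norm_bounded ((hasSum_geometric_of_lt_one (by positivity) hKx).mul_left x)
    (norm_mul_pow_succ_le ha hq)

end PowerSeries

lemma closedBall_subset_setOf_le_im {a R : ℝ} {c : ℂ} (hc : a + R ≤ c.im) :
    closedBall c R ⊆ {z | a ≤ z.im} := fun z hz ↦ by
  have := (abs_im_le_norm (z - c)).trans (mem_closedBall_iff_norm.1 hz)
  rw [sub_im, abs_le] at this
  show a ≤ z.im
  linarith [this.1]

lemma norm_sub_le_of_forall_le_im_norm_le {F : Type*} [NormedAddCommGroup F] [NormedSpace ℂ F]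
    {f : ℂ → F} {a R C : ℝ} (hR : 0 < R) (hf : DifferentiableOn ℂ f {z | a ≤ z.im})
    (hC : ∀ z : ℂ, a ≤ z.im → ‖f z‖ ≤ C) {z w : ℂ} (hz : a + R ≤ z.im) (hw : a + R ≤ w.im) :
    ‖f z - f w‖ ≤ C / R * ‖z - w‖ := by
  have hdisc : ∀ c : ℂ, a + R ≤ c.im → DiffContOnCl ℂ f (ball c R) := fun c hc ↦
    (hf.mono (closure_ball_subset_closedBall.trans (closedBall_subset_setOf_le_im hc))).diffContOnCl
  refine (convex_halfSpace_im_ge (a + R)).norm_image_sub_le_of_norm_deriv_le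
    (fun c hc ↦ (hdisc c hc).differentiableAt isOpen_ball (mem_ball_self hR))
    (fun c hc ↦ Complex.norm_deriv_le_of_forall_mem_sphere_norm_le hR (hdisc c hc)
      fun y hy ↦ hC y (closedBall_subset_setOf_le_im hc (sphere_subset_closedBall hy))) hw hz

lemma norm_inv_sub_one_le_s8 {𝕜 : Type*} [NormedField 𝕜] {u : 𝕜} {δ : ℝ} (hδ : δ < 1)
    (hu : ‖u - 1‖ ≤ δ) : ‖u⁻¹ - 1‖ ≤ δ / (1 - δ) := by
  have hu_norm : 1 - δ ≤ ‖u‖ := by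
    have := norm_sub_norm_le (1 : 𝕜) u
    rw [norm_one, norm_sub_rev] at this
    linarith
  have hu0 : u ≠ 0 := norm_pos_iff.1 (by linarith)
  calc ‖u⁻¹ - 1‖ = ‖u - 1‖ / ‖u‖ := by
        rw [← norm_div, ← norm_neg, neg_sub, sub_div, div_self hu0, one_div]
    _ ≤ δ / (1 - δ) := div_le_div₀ ((norm_nonneg _).trans hu) hu (by linarith) hu_norm

theorem existsUnique_isFixedPt_of_lipschitzOnWith {α : Type*} [MetricSpace α] {s : Set α}
    {f : α → α} {K : NNReal} (hK : K < 1) (hs : IsComplete s) (hne : s.Nonempty)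
    (hmaps : MapsTo f s s) (hf : LipschitzOnWith K f s) : ∃! x, x ∈ s ∧ IsFixedPt f x := by
  have hcontr : ContractingWith K (hmaps.restrict f s s) :=
    ⟨hK, LipschitzWith.of_dist_le_mul fun x y ↦ hf.dist_le_mul x x.2 y y.2⟩
  obtain ⟨x₀, hx₀⟩ := hne
  obtain ⟨x, hx, hfix, -⟩ := hcontr.exists_fixedPoint' hs hmaps hx₀ (edist_ne_top _ _)
  refine ⟨x, ⟨hx, hfix⟩, fun y ⟨hy, hfixy⟩ ↦ ?_⟩
  exact congrArg Subtype.val <| hcontr.fixedPoint_unique' (x := ⟨y, hy⟩) (y := ⟨x, hx⟩)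
    (Subtype.ext hfixy) (Subtype.ext hfix)

lemma norm_sigma_one_succ_le (n : ℕ) : ‖(σ 1 (n + 1) : ℂ)‖ ≤ 4 ^ n := by
  have hσ : σ 1 (n + 1) ≤ 4 ^ n :=
    calc σ 1 (n + 1) ≤ (n + 1) ^ 2 := sigma_le_pow_succ 1 (n + 1)
      _ ≤ (2 ^ n) ^ 2 := Nat.pow_le_pow_left Nat.lt_two_pow_self 2
      _ = 4 ^ n := by rw [← pow_mul, mul_comm, pow_mul]; norm_num
  rw [Complex.norm_natCast]
  exact_mod_cast hσ

lemma qParam_one_pow_succ (n : ℕ) (z : ℂ) :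
    𝕢 1 z ^ (n + 1) = cexp (2 * π * I * ((n : ℂ) + 1) * z) := by
  rw [qParam, ← Complex.exp_nat_mul]
  push_cast
  ring_nf

lemma E₂_eq_tsum_qParam (z : ℂ) :
    E₂ z = 1 - 24 * ∑' n : ℕ, (σ 1 (n + 1) : ℂ) * 𝕢 1 z ^ (n + 1) := by
  simp only [E₂, qParam_one_pow_succ]

lemma norm_E₂_sub_one_le_s8 {z : ℂ} {x : ℝ} (hq : ‖𝕢 1 z‖ ≤ x) (hx : 4 * x < 1) :
    ‖E₂ z - 1‖ ≤ 24 * (x / (1 - 4 * x)) := by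
  rw [E₂_eq_tsum_qParam, sub_sub_cancel_left, norm_neg, norm_mul, Complex.norm_ofNat]
  gcongr
  exact norm_tsum_mul_pow_succ_le norm_sigma_one_succ_le hq hx

lemma norm_qParam_le_of_le_im {c : ℝ} {z : ℂ} (hz : c ≤ z.im) :
    ‖𝕢 1 z‖ ≤ rexp (-2 * π * c) := by
  rw [norm_qParam, div_one]
  exact Real.exp_le_exp.2 (by nlinarith [pi_pos])

lemma differentiableOn_E₂ {c : ℝ} (hc : 4 * rexp (-2 * π * c) < 1) :
    DifferentiableOn ℂ E₂ {z | c < z.im} := by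
  have hsum := differentiableOn_tsum_of_summable_norm
    (F := fun n z ↦ (σ 1 (n + 1) : ℂ) * 𝕢 1 z ^ (n + 1))
    ((summable_geometric_of_lt_one (by positivity) hc).mul_left (rexp (-2 * π * c)))
    (fun n ↦ by unfold qParam; fun_prop) (isOpen_lt continuous_const continuous_im)
    (fun n z hz ↦ norm_mul_pow_succ_le norm_sigma_one_succ_le (norm_qParam_le_of_le_im hz.le) n)
  simp_rw [funext E₂_eq_tsum_qParam]
  exact hsum.const_mul _ |>.const_sub _

lemma exp_neg_two_pi_mul_le_one_div_148 : rexp (-2 * π * 0.95) ≤ 1 / 148 := by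
  have h5 : (148 : ℝ) ≤ rexp 5 :=
    calc (148 : ℝ) ≤ 2.7182818283 ^ 5 := by norm_num
      _ ≤ rexp 1 ^ 5 := by gcongr; exact Real.exp_one_gt_d9.le
      _ = rexp 5 := by rw [Real.exp_one_pow]; norm_num
  calc rexp (-2 * π * 0.95) ≤ rexp (-5) := Real.exp_le_exp.2 (by nlinarith [pi_gt_three])
    _ ≤ 1 / 148 := by rw [Real.exp_neg, one_div]; gcongr

lemma norm_E₂_sub_one_le_one_div_six {z : ℂ} (hz : 0.95 ≤ z.im) : ‖E₂ z - 1‖ ≤ 1 / 6 := by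
  have := norm_E₂_sub_one_le_s8 ((norm_qParam_le_of_le_im hz).trans exp_neg_two_pi_mul_le_one_div_148)
    (by norm_num)
  norm_num at this ⊢
  linarith

lemma E₂_ne_zero {z : ℂ} (hz : 0.95 ≤ z.im) : E₂ z ≠ 0 := fun h0 ↦ by
  have := norm_E₂_sub_one_le_one_div_six hz
  rw [h0, zero_sub, norm_neg, norm_one] at this
  norm_num at this

lemma norm_inv_E₂_sub_one_le_one_div_five {z : ℂ} (hz : 0.95 ≤ z.im) : ‖(E₂ z)⁻¹ - 1‖ ≤ 1 / 5 := by
  have := norm_inv_sub_one_le_s8 (by norm_num) (norm_E₂_sub_one_le_one_div_six hz)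
  norm_num at this ⊢
  linarith

lemma four_fifths_le_re_inv_E₂ {z : ℂ} (hz : 0.95 ≤ z.im) : 4 / 5 ≤ ((E₂ z)⁻¹).re := by
  have := (abs_re_le_norm _).trans (norm_inv_E₂_sub_one_le_one_div_five hz)
  rw [sub_re, one_re, abs_le] at this
  linarith

lemma differentiableOn_inv_E₂ : DifferentiableOn ℂ (fun z ↦ (E₂ z)⁻¹) {z | 1 ≤ z.im} := by
  have hsub : {z : ℂ | 1 ≤ z.im} ⊆ {z | 0.95 < z.im} := fun z (hz : 1 ≤ z.im) ↦
    show (0.95 : ℝ) < z.im by linarith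
  exact ((differentiableOn_E₂ (by linarith [exp_neg_two_pi_mul_le_one_div_148])).mono hsub).inv
    fun z hz ↦ E₂_ne_zero (hsub hz).le

noncomputable def hFixMap (r : ℝ) (z : ℂ) : ℂ := r + (6 / π : ℝ) * I * (E₂ z)⁻¹

lemma isFixedPt_hFixMap_iff {r : ℝ} {z : ℂ} : IsFixedPt (hFixMap r) z ↔ h z = r := by
  have hc : (6 : ℂ) / (π * I) = -((6 / π : ℝ) * I) := by
    push_cast
    field_simp
    rw [I_sq]
    ring
  rw [IsFixedPt, hFixMap, h, hc]
  constructor <;> intro h' <;> linear_combination -h'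

lemma im_hFixMap (r : ℝ) (z : ℂ) : (hFixMap r z).im = 6 / π * ((E₂ z)⁻¹).re := by
  simp [hFixMap]

lemma three_halves_le_im_hFixMap (r : ℝ) {z : ℂ} (hz : 0.95 ≤ z.im) :
    3 / 2 ≤ (hFixMap r z).im := by
  rw [im_hFixMap]
  calc (3 / 2 : ℝ) ≤ 6 / π * (4 / 5) := by
        rw [div_mul_eq_mul_div, le_div_iff₀ pi_pos]; nlinarith [pi_lt_d2]
    _ ≤ 6 / π * ((E₂ z)⁻¹).re := by gcongr; exact four_fifths_le_re_inv_E₂ hz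

lemma lipschitzOnWith_hFixMap (r : ℝ) :
    LipschitzOnWith (4 / 5) (hFixMap r) {z | 3 / 2 ≤ z.im} := by
  refine LipschitzOnWith.of_dist_le_mul fun z (hz : 3 / 2 ≤ z.im) w (hw : 3 / 2 ≤ w.im) ↦ ?_
  have hinv := norm_sub_le_of_forall_le_im_norm_le (f := fun z ↦ (E₂ z)⁻¹ - 1) (a := 1)
    (R := 1 / 2) (by norm_num) (differentiableOn_inv_E₂.sub_const 1)
    (fun z hz ↦ norm_inv_E₂_sub_one_le_one_div_five (by norm_num at hz ⊢; linarith))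
    (z := z) (w := w) (by linarith) (by linarith)
  rw [dist_eq_norm, dist_eq_norm]
  calc ‖hFixMap r z - hFixMap r w‖ = 6 / π * ‖(E₂ z)⁻¹ - 1 - ((E₂ w)⁻¹ - 1)‖ := by
        rw [hFixMap, hFixMap, add_sub_add_left_eq_sub, ← mul_sub, sub_sub_sub_cancel_right,
          norm_mul, norm_mul, norm_I, mul_one, norm_real, Real.norm_of_nonneg (by positivity)]
    _ ≤ 6 / π * (1 / 5 / (1 / 2) * ‖z - w‖) := by gcongr
    _ ≤ (4 / 5 : NNReal) * ‖z - w‖ := by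
        rw [← mul_assoc]
        gcongr
        rw [div_mul_eq_mul_div, div_le_iff₀ pi_pos]
        push_cast
        nlinarith [pi_gt_three]

theorem stmt_8_general (r : ℝ) :
    ∃! z : ℂ, 0.95 < z.im ∧ E₂ z ≠ 0 ∧ h z = (r : ℂ) := by
  have h95 : ∀ {z : ℂ}, z ∈ {z : ℂ | 3 / 2 ≤ z.im} → 0.95 < z.im := fun hz ↦ by
    norm_num at hz ⊢; linarith
  obtain ⟨z, ⟨hz, hfix⟩, huniq⟩ := existsUnique_isFixedPt_of_lipschitzOnWith (by norm_num)
    (isClosed_le continuous_const continuous_im).isComplete ⟨2 * I, by norm_num⟩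
    (fun z hz ↦ three_halves_le_im_hFixMap r (h95 hz).le) (lipschitzOnWith_hFixMap r)
  refine ⟨z, ⟨h95 hz, E₂_ne_zero (h95 hz).le, isFixedPt_hFixMap_iff.1 hfix⟩, ?_⟩
  rintro w ⟨hw, -, hhw⟩
  have hfixw := isFixedPt_hFixMap_iff.2 hhw
  exact huniq w ⟨hfixw ▸ three_halves_le_im_hFixMap r hw.le, hfixw⟩

/-- h takes every real value in [-1/2, 1/2] exactly once in the region
Im z > 0.95. -/
theorem stmt_8 (r : ℝ) (hr₁ : -(1 / 2) ≤ r) (hr₂ : r ≤ 1 / 2) :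
    ∃! z : ℂ, 0.95 < z.im ∧ E₂ z ≠ 0 ∧ h z = (r : ℂ) :=
  stmt_8_general r
end

section
/- For every y > 0, E₂(iy) is real. The function y ↦ E₂(iy) is strictly increasing on (0,∞), tends to 1 as y → ∞, and tends to -∞ as y → 0⁺. Consequently there exists exactly one y₀ > 0 with E₂(iy₀) = 0. -/
open Complex Real

/-!
On the imaginary axis every term `σ₁(n) e^{-2πny}` of the `q`-expansion is a positive real number,
strictly decreasing in `y`, so `E₂(iy) = 1 - 24 F(y)` with `F` real and strictly decreasing.
Domination by the terms at a fixed height gives continuity of `F` and `F(y) → 0` as `y → ∞`;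
as `y → 0⁺` the `N`-th partial sum tends to `σ₁(1) + ⋯ + σ₁(N) ≥ N`, so `F(y) → ∞`.
The zero is then given by the intermediate value theorem, and is unique by monotonicity.
-/

open Filter Topology Set
open scoped ArithmeticFunction.sigma

/-- The `q`-series `∑ aₙ qⁿ⁺¹` evaluated at `z = iy`, where `q = e^{2πiz} = e^{-2πy}`. -/
noncomputable def qSeriesIm (a : ℕ → ℝ) (y : ℝ) : ℝ :=
  ∑' n : ℕ, a n * rexp (-(2 * π * (n + 1) * y))

section qSeriesIm

variable {a : ℕ → ℝ}

lemma exp_neg_two_pi_mul_lt {x y : ℝ} (hxy : x < y) (n : ℕ) :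
    rexp (-(2 * π * (n + 1) * y)) < rexp (-(2 * π * (n + 1) * x)) := by
  have := pi_pos
  gcongr

lemma summable_qSeriesIm_of_le_pow (ha : ∀ n, 0 ≤ a n) {k : ℕ} (hk : ∀ n, a n ≤ (n + 1) ^ k)
    {y : ℝ} (hy : 0 < y) : Summable fun n : ℕ => a n * rexp (-(2 * π * (n + 1) * y)) := by
  set r := rexp (-(2 * π * y))
  have hr : ‖r‖ < 1 := by
    rw [Real.norm_of_nonneg (Real.exp_pos _).le, Real.exp_lt_one_iff, neg_lt_zero]
    have := pi_pos
    positivity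
  have hgeom : Summable fun n : ℕ => ((n : ℝ) + 1) ^ k * r ^ (n + 1) := by
    have := (summable_nat_add_iff (f := fun n : ℕ => (n : ℝ) ^ k * r ^ n) 1).2
      (summable_pow_mul_geometric_of_norm_lt_one k hr)
    exact_mod_cast this
  refine hgeom.of_nonneg_of_le (fun n => mul_nonneg (ha n) (Real.exp_pos _).le) fun n => ?_
  have hexp : rexp (-(2 * π * (n + 1) * y)) = r ^ (n + 1) := by
    rw [← Real.exp_nat_mul]
    push_cast
    ring_nf
  rw [hexp]
  exact mul_le_mul_of_nonneg_right (hk n) (by positivity)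

variable (hs : ∀ y, 0 < y → Summable fun n : ℕ => a n * rexp (-(2 * π * (n + 1) * y)))
include hs

lemma qSeriesIm_strictAntiOn (ha : ∀ n, 0 ≤ a n) (ha₀ : 0 < a 0) :
    StrictAntiOn (qSeriesIm a) (Ioi 0) := fun x hx y hy hxy =>
  Summable.tsum_lt_tsum (i := 0)
    (fun n => mul_le_mul_of_nonneg_left (exp_neg_two_pi_mul_lt hxy n).le (ha n))
    (mul_lt_mul_of_pos_left (exp_neg_two_pi_mul_lt hxy 0) ha₀) (hs y hy) (hs x hx)

lemma continuousOn_qSeriesIm (ha : ∀ n, 0 ≤ a n) : ContinuousOn (qSeriesIm a) (Ioi 0) := by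
  intro y hy
  refine (ContinuousOn.continuousAt ?_ (Ici_mem_nhds (half_lt_self hy))).continuousWithinAt
  refine continuousOn_tsum (fun n => by fun_prop) (hs _ (half_pos hy)) fun n x hx => ?_
  have := pi_pos
  have hx : y / 2 ≤ x := hx
  rw [Real.norm_of_nonneg (mul_nonneg (ha n) (Real.exp_pos _).le)]
  gcongr
  exact ha n

lemma tendsto_qSeriesIm_atTop (ha : ∀ n, 0 ≤ a n) : Tendsto (qSeriesIm a) atTop (𝓝 0) := by
  have := pi_pos
  have hterm (n : ℕ) : Tendsto (fun y : ℝ => a n * rexp (-(2 * π * (n + 1) * y))) atTop (𝓝 0) := by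
    have hlin : Tendsto (fun y : ℝ => 2 * π * (n + 1) * y) atTop atTop :=
      tendsto_id.const_mul_atTop (by positivity)
    simpa using (Real.tendsto_exp_atBot.comp (tendsto_neg_atTop_atBot.comp hlin)).const_mul (a n)
  have hbound : ∀ᶠ y in atTop, ∀ n : ℕ,
      ‖a n * rexp (-(2 * π * (n + 1) * y))‖ ≤ a n * rexp (-(2 * π * (n + 1) * 1)) := by
    filter_upwards [eventually_ge_atTop 1] with y hy n
    rw [Real.norm_of_nonneg (mul_nonneg (ha n) (Real.exp_pos _).le)]
    gcongr
    exact ha n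
  unfold qSeriesIm
  simpa using tendsto_tsum_of_dominated_convergence (hs 1 one_pos) hterm hbound

lemma tendsto_qSeriesIm_nhdsGT_zero (ha : ∀ n, 1 ≤ a n) :
    Tendsto (qSeriesIm a) (𝓝[>] 0) atTop := by
  refine tendsto_atTop.2 fun M => ?_
  obtain ⟨N, hN⟩ := exists_nat_gt M
  set partialSum := fun y : ℝ => ∑ n ∈ Finset.range N, a n * rexp (-(2 * π * (n + 1) * y))
  have hlim : Tendsto partialSum (𝓝[>] 0) (𝓝 (∑ n ∈ Finset.range N, a n)) := by
    have : Continuous partialSum := by fun_prop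
    simpa [partialSum] using (this.tendsto 0).mono_left nhdsWithin_le_nhds
  have hM : M < ∑ n ∈ Finset.range N, a n :=
    hN.trans_le (by simpa using Finset.card_nsmul_le_sum (Finset.range N) a 1 fun n _ => ha n)
  filter_upwards [hlim.eventually_const_lt hM, self_mem_nhdsWithin] with y hy hy₀
  exact hy.le.trans <| Summable.sum_le_tsum _
    (fun n _ => mul_nonneg (zero_le_one.trans (ha n)) (Real.exp_pos _).le) (hs y hy₀)

end qSeriesIm

lemma existsUnique_pos_eq_of_strictMonoOn {f : ℝ → ℝ} {c L : ℝ} (hmono : StrictMonoOn f (Ioi 0))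
    (hcont : ContinuousOn f (Ioi 0)) (hbot : Tendsto f (𝓝[>] 0) atBot)
    (htop : Tendsto f atTop (𝓝 L)) (hc : c < L) : ∃! y, 0 < y ∧ f y = c := by
  obtain ⟨a, hfa, ha⟩ := ((hbot.eventually_le_atBot c).and self_mem_nhdsWithin).exists
  obtain ⟨b, hfb, hab⟩ := ((htop.eventually_const_le hc).and (eventually_gt_atTop a)).exists
  obtain ⟨y, hy, rfl⟩ := intermediate_value_Icc hab.le
    (hcont.mono fun x hx => ha.trans_le hx.1) ⟨hfa, hfb⟩
  exact ⟨y, ⟨ha.trans_le hy.1, rfl⟩, fun x hx => hmono.injOn hx.1 (ha.trans_le hy.1) hx.2⟩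

lemma E₂_I_mul_ofReal (y : ℝ) :
    E₂ (I * y) = ((1 - 24 * qSeriesIm (fun n => (σ 1 (n + 1) : ℝ)) y : ℝ) : ℂ) := by
  have hterm (n : ℕ) : (σ 1 (n + 1) : ℂ) * cexp (2 * π * I * (n + 1) * (I * y)) =
      ((σ 1 (n + 1) * rexp (-(2 * π * (n + 1) * y)) : ℝ) : ℂ) := by
    push_cast
    congr 2
    linear_combination (2 * π * (n + 1) * y : ℂ) * I_mul_I
  rw [E₂, tsum_congr hterm, ← ofReal_tsum, qSeriesIm]
  push_cast
  rfl

lemma one_le_sigma_one_succ (n : ℕ) : (1 : ℝ) ≤ σ 1 (n + 1) := by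
  exact_mod_cast ArithmeticFunction.sigma_pos 1 (n + 1) n.succ_ne_zero

lemma sigma_one_succ_le_sq (n : ℕ) : (σ 1 (n + 1) : ℝ) ≤ (n + 1) ^ 2 := by
  exact_mod_cast ArithmeticFunction.sigma_le_pow_succ 1 (n + 1)

/-- E₂(iy) is real, increasing, tends to 1 at ∞ and to -∞ at 0⁺, and has a
unique zero on the imaginary axis. -/
theorem stmt_11 :
    (∀ y : ℝ, 0 < y → (E₂ (Complex.I * y)).im = 0) ∧
    StrictMonoOn (fun y : ℝ => (E₂ (Complex.I * y)).re) (Set.Ioi 0) ∧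
    Filter.Tendsto (fun y : ℝ => (E₂ (Complex.I * y)).re) Filter.atTop (nhds 1) ∧
    Filter.Tendsto (fun y : ℝ => (E₂ (Complex.I * y)).re)
      (nhdsWithin 0 (Set.Ioi 0)) Filter.atBot ∧
    (∃! y₀ : ℝ, 0 < y₀ ∧ E₂ (Complex.I * y₀) = 0) := by
  set F := qSeriesIm fun n => (σ 1 (n + 1) : ℝ)
  have ha (n : ℕ) : (0 : ℝ) ≤ σ 1 (n + 1) := zero_le_one.trans (one_le_sigma_one_succ n)
  have hs (y : ℝ) (hy : 0 < y) := summable_qSeriesIm_of_le_pow ha sigma_one_succ_le_sq hy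
  have hre : (fun y : ℝ => (E₂ (I * y)).re) = fun y => 1 - 24 * F y := by
    ext y
    simp [E₂_I_mul_ofReal, F]
  have hanti := qSeriesIm_strictAntiOn hs ha (zero_lt_one.trans_le (one_le_sigma_one_succ 0))
  have hmono : StrictMonoOn (fun y => 1 - 24 * F y) (Ioi 0) := fun x hx y hy hxy => by
    linarith [hanti hx hy hxy]
  have htop : Tendsto (fun y => 1 - 24 * F y) atTop (𝓝 1) := by
    simpa using ((tendsto_qSeriesIm_atTop hs ha).const_mul 24).const_sub 1
  have hbot : Tendsto (fun y => 1 - 24 * F y) (𝓝[>] 0) atBot :=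
    tendsto_atBot_add_const_left _ 1 <| tendsto_neg_atTop_atBot.comp <|
      (tendsto_qSeriesIm_nhdsGT_zero hs one_le_sigma_one_succ).const_mul_atTop (by norm_num)
  refine ⟨fun y _ => by simp [E₂_I_mul_ofReal], hre ▸ hmono, hre ▸ htop, hre ▸ hbot, ?_⟩
  simp_rw [E₂_I_mul_ofReal, ofReal_eq_zero]
  exact existsUnique_pos_eq_of_strictMonoOn hmono
    (continuousOn_const.sub (continuousOn_const.mul (continuousOn_qSeriesIm hs ha))) hbot htop
    one_pos
end

section
/- For every z ∈ ℍ with Im z ≥ 0.95, the complex derivative of E₂ satisfies |E₂'(z)| ≤ 48π ∑_{n=1}^∞ σ₁(n)·n·e^{-2πn·Im z} < 0.4. -/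
/-!
Differentiating the q-series termwise, which is legitimate because on each half-plane
`Im w > t > 0` the differentiated terms are dominated by `2π σ₁(n) n e^{-2πnt}`, gives
`E₂' = -48πi ∑ σ₁(n) n qⁿ`, and the first inequality is the triangle inequality.
For the numerical bound, `σ₁(n) n ≤ n³ ≤ 8ⁿ⁻¹`, so with `r = e^{-2π Im z}` the majorant series
is at most `r / (1 - 8r)`; for `Im z ≥ 0.95` we have `r ≤ e^{-1.9π} < 1/390`, and
`48π · (1/390) / (1 - 8/390) = 48π/382 < 0.4`.
-/

open Complex Real

open ArithmeticFunction
open scoped ArithmeticFunction.sigma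

lemma norm_cexp_two_pi_I_mul_s14 (x : ℝ) (w : ℂ) :
    ‖cexp (2 * π * I * x * w)‖ = rexp (-2 * π * x * w.im) := by
  rw [norm_exp]
  congr 1
  simp [mul_re, mul_im]

lemma norm_cexp_two_pi_I_mul_succ (n : ℕ) (w : ℂ) :
    ‖cexp (2 * π * I * ((n : ℂ) + 1) * w)‖ = rexp (-2 * π * ((n : ℝ) + 1) * w.im) :=
  mod_cast norm_cexp_two_pi_I_mul_s14 ((n : ℝ) + 1) w

lemma exp_neg_two_pi_mul_succ (n : ℕ) (t : ℝ) :
    rexp (-2 * π * ((n : ℝ) + 1) * t) = rexp (-2 * π * t) ^ (n + 1) := by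
  rw [← Real.exp_nat_mul]
  push_cast
  ring_nf

theorem hasDerivAt_tsum_mul_cexp {a : ℕ → ℂ} {t : ℝ} {z : ℂ} (ht : t < z.im)
    (ha : Summable fun n : ℕ => ‖a n‖ * ((n : ℝ) + 1) * rexp (-2 * π * ((n : ℝ) + 1) * t)) :
    HasDerivAt (fun w => ∑' n : ℕ, a n * cexp (2 * π * I * ((n : ℂ) + 1) * w))
      (∑' n : ℕ, a n * (2 * π * I * ((n : ℂ) + 1)) * cexp (2 * π * I * ((n : ℂ) + 1) * z)) z := by
  have hterm (n : ℕ) (w : ℂ) : HasDerivAt (fun w => a n * cexp (2 * π * I * ((n : ℂ) + 1) * w))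
      (a n * (2 * π * I * ((n : ℂ) + 1)) * cexp (2 * π * I * ((n : ℂ) + 1) * w)) w := by
    have := ((hasDerivAt_id w).const_mul (2 * π * I * ((n : ℂ) + 1))).cexp.const_mul (a n)
    simpa [mul_comm, mul_assoc, mul_left_comm] using this
  have hexp_le (n : ℕ) (w : ℂ) (hw : t < w.im) :
      ‖cexp (2 * π * I * ((n : ℂ) + 1) * w)‖ ≤ rexp (-2 * π * ((n : ℝ) + 1) * t) := by
    rw [norm_cexp_two_pi_I_mul_succ, exp_le_exp]
    have : 0 < 2 * π * ((n : ℝ) + 1) := by positivity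
    nlinarith
  refine hasDerivAt_tsum_of_isPreconnected (ha.mul_left (2 * π))
    (isOpen_lt continuous_const continuous_im) (convex_halfSpace_im_gt t).isPreconnected
    (fun n w _ => hterm n w) (fun n w hw => ?_) ht ?_ ht
  · have h2pi : ‖2 * π * I * ((n : ℂ) + 1)‖ = 2 * π * ((n : ℝ) + 1) := by
      have hn : ‖(n : ℂ) + 1‖ = (n : ℝ) + 1 := by exact_mod_cast Complex.norm_natCast (n + 1)
      simp [hn, abs_of_pos pi_pos]
    rw [norm_mul, norm_mul, h2pi]
    calc ‖a n‖ * (2 * π * ((n : ℝ) + 1)) * ‖cexp (2 * π * I * ((n : ℂ) + 1) * w)‖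
        ≤ ‖a n‖ * (2 * π * ((n : ℝ) + 1)) * rexp (-2 * π * ((n : ℝ) + 1) * t) := by
          gcongr; exact hexp_le n w hw
      _ = 2 * π * (‖a n‖ * ((n : ℝ) + 1) * rexp (-2 * π * ((n : ℝ) + 1) * t)) := by ring
  · refine ha.of_norm_bounded fun n => ?_
    rw [norm_mul]
    calc ‖a n‖ * ‖cexp (2 * π * I * ((n : ℂ) + 1) * z)‖
        ≤ ‖a n‖ * 1 * rexp (-2 * π * ((n : ℝ) + 1) * t) := by
          rw [mul_one]; gcongr; exact hexp_le n z ht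
      _ ≤ ‖a n‖ * ((n : ℝ) + 1) * rexp (-2 * π * ((n : ℝ) + 1) * t) := by
          gcongr; linarith [n.cast_nonneg (α := ℝ)]

lemma summable_sigma_one_mul_pow {r : ℝ} (hr0 : 0 ≤ r) (hr1 : r < 1) :
    Summable fun n : ℕ => (σ 1 (n + 1) : ℝ) * ((n : ℝ) + 1) * r ^ (n + 1) := by
  have hcube : Summable fun n : ℕ => ((n + 1 : ℕ) : ℝ) ^ 3 * r ^ (n + 1) :=
    (summable_nat_add_iff (f := fun m : ℕ => (m : ℝ) ^ 3 * r ^ m) 1).mpr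
      (summable_pow_mul_geometric_of_norm_lt_one 3 (by rwa [norm_of_nonneg hr0]))
  refine hcube.of_nonneg_of_le (fun n => by positivity) fun n => ?_
  have hσ : (σ 1 (n + 1) : ℝ) ≤ ((n + 1 : ℕ) : ℝ) ^ 2 := by
    exact_mod_cast sigma_le_pow_succ 1 (n + 1)
  push_cast at hσ ⊢
  calc (σ 1 (n + 1) : ℝ) * ((n : ℝ) + 1) * r ^ (n + 1)
      ≤ ((n : ℝ) + 1) ^ 2 * ((n : ℝ) + 1) * r ^ (n + 1) := by gcongr
    _ = ((n : ℝ) + 1) ^ 3 * r ^ (n + 1) := by ring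

lemma summable_sigma_one_mul_exp {t : ℝ} (ht : 0 < t) :
    Summable fun n : ℕ =>
      (σ 1 (n + 1) : ℝ) * ((n : ℝ) + 1) * rexp (-2 * π * ((n : ℝ) + 1) * t) := by
  simp only [exp_neg_two_pi_mul_succ]
  exact summable_sigma_one_mul_pow (exp_pos _).le (Real.exp_lt_one_iff.mpr (by nlinarith [pi_pos]))

theorem hasDerivAt_E₂ {z : ℂ} (hz : 0 < z.im) :
    HasDerivAt E₂ (-48 * π * I * ∑' n : ℕ, (σ 1 (n + 1) : ℂ) * ((n : ℂ) + 1) *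
      cexp (2 * π * I * ((n : ℂ) + 1) * z)) z := by
  have hsum : Summable fun n : ℕ => ‖(σ 1 (n + 1) : ℂ)‖ * ((n : ℝ) + 1) *
      rexp (-2 * π * ((n : ℝ) + 1) * (z.im / 2)) := by
    simpa only [Complex.norm_natCast] using summable_sigma_one_mul_exp (half_pos hz)
  have := ((hasDerivAt_tsum_mul_cexp (half_lt_self hz) hsum).const_mul 24).const_sub 1
  refine HasDerivAt.congr_deriv (f := E₂) this ?_
  rw [← neg_mul, ← tsum_mul_left, ← tsum_mul_left]
  congr 1 with n
  ring

lemma norm_deriv_E₂_le {z : ℂ} (hz : 0 < z.im) :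
    ‖deriv E₂ z‖ ≤ 48 * π * ∑' n : ℕ, (σ 1 (n + 1) : ℝ) * ((n : ℝ) + 1) *
      rexp (-2 * π * ((n : ℝ) + 1) * z.im) := by
  set f : ℕ → ℂ := fun n =>
    (σ 1 (n + 1) : ℂ) * ((n : ℂ) + 1) * cexp (2 * π * I * ((n : ℂ) + 1) * z)
  have hnorm : (fun n => ‖f n‖) = fun n : ℕ =>
      (σ 1 (n + 1) : ℝ) * ((n : ℝ) + 1) * rexp (-2 * π * ((n : ℝ) + 1) * z.im) := by
    ext n
    have hn : ‖(n : ℂ) + 1‖ = (n : ℝ) + 1 := by exact_mod_cast Complex.norm_natCast (n + 1)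
    rw [norm_mul, norm_mul, hn, Complex.norm_natCast, norm_cexp_two_pi_I_mul_succ]
  have h48 : ‖-48 * (π : ℂ) * I‖ = 48 * π := by simp [abs_of_pos pi_pos]
  rw [(hasDerivAt_E₂ hz).deriv, norm_mul, h48, ← hnorm]
  gcongr
  exact norm_tsum_le_tsum_norm (hnorm ▸ summable_sigma_one_mul_exp hz)

lemma sigma_one_mul_le_eight_pow (n : ℕ) : σ 1 (n + 1) * (n + 1) ≤ 8 ^ n :=
  calc σ 1 (n + 1) * (n + 1) ≤ (n + 1) ^ 2 * (n + 1) :=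
        Nat.mul_le_mul_right _ (sigma_le_pow_succ 1 (n + 1))
    _ = (n + 1) ^ 3 := by ring
    _ ≤ (2 ^ n) ^ 3 := Nat.pow_le_pow_left Nat.lt_two_pow_self 3
    _ = 8 ^ n := by rw [← pow_mul, mul_comm, pow_mul]; norm_num

lemma tsum_sigma_one_mul_pow_le {r : ℝ} (hr0 : 0 ≤ r) (hr : 8 * r < 1) :
    ∑' n : ℕ, (σ 1 (n + 1) : ℝ) * ((n : ℝ) + 1) * r ^ (n + 1) ≤ r / (1 - 8 * r) := by
  have hgeom := summable_geometric_of_lt_one (by positivity) hr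
  have hterm (n : ℕ) : (σ 1 (n + 1) : ℝ) * ((n : ℝ) + 1) * r ^ (n + 1) ≤ r * (8 * r) ^ n := by
    have h8 : (σ 1 (n + 1) : ℝ) * ((n : ℝ) + 1) ≤ 8 ^ n := by
      exact_mod_cast sigma_one_mul_le_eight_pow n
    calc (σ 1 (n + 1) : ℝ) * ((n : ℝ) + 1) * r ^ (n + 1) ≤ 8 ^ n * r ^ (n + 1) := by gcongr
      _ = r * (8 * r) ^ n := by ring
  calc ∑' n : ℕ, (σ 1 (n + 1) : ℝ) * ((n : ℝ) + 1) * r ^ (n + 1) ≤ ∑' n : ℕ, r * (8 * r) ^ n :=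
        (summable_sigma_one_mul_pow hr0 (by linarith)).tsum_le_tsum hterm (hgeom.mul_left r)
    _ = r / (1 - 8 * r) := by
        rw [tsum_mul_left, tsum_geometric_of_lt_one (by positivity) hr, div_eq_mul_inv]

lemma three_hundred_ninety_lt_exp : (390 : ℝ) < rexp (1.9 * π) := by
  have he : (2.7182818 : ℝ) ^ 6 < rexp 6 := by
    rw [show (6 : ℝ) = (6 : ℕ) * 1 by norm_num, Real.exp_nat_mul]
    exact pow_lt_pow_left₀ (by linarith [exp_one_gt_d9]) (by norm_num) (by norm_num)
  have hsmall : (0.969 : ℝ) ≤ rexp (-0.031) := by linarith [add_one_le_exp (-0.031 : ℝ)]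
  calc (390 : ℝ) < 2.7182818 ^ 6 * 0.969 := by norm_num
    _ ≤ rexp 6 * rexp (-0.031) := by gcongr
    _ = rexp 5.969 := by rw [← Real.exp_add]; norm_num
    _ ≤ rexp (1.9 * π) := exp_le_exp.mpr (by linarith [pi_gt_d6])

lemma exp_neg_two_pi_mul_lt_s14 {t : ℝ} (ht : 0.95 ≤ t) : rexp (-2 * π * t) < 1 / 390 :=
  calc rexp (-2 * π * t) ≤ rexp (-(1.9 * π)) := exp_le_exp.mpr (by nlinarith [pi_pos])
    _ = (rexp (1.9 * π))⁻¹ := Real.exp_neg _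
    _ < 1 / 390 := by rw [one_div]; exact inv_strictAnti₀ (by norm_num) three_hundred_ninety_lt_exp

lemma tsum_sigma_one_mul_exp_lt {t : ℝ} (ht : 0.95 ≤ t) :
    48 * π * ∑' n : ℕ, (σ 1 (n + 1) : ℝ) * ((n : ℝ) + 1) * rexp (-2 * π * ((n : ℝ) + 1) * t)
      < 0.4 := by
  set r := rexp (-2 * π * t)
  have hr : r < 1 / 390 := exp_neg_two_pi_mul_lt_s14 ht
  have hS : ∑' n : ℕ, (σ 1 (n + 1) : ℝ) * ((n : ℝ) + 1) * rexp (-2 * π * ((n : ℝ) + 1) * t)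
      ≤ r / (1 - 8 * r) := by
    simpa only [exp_neg_two_pi_mul_succ] using
      tsum_sigma_one_mul_pow_le (exp_pos _).le (by linarith)
  have hq : r / (1 - 8 * r) < 1 / 382 := by
    rw [div_lt_iff₀ (by linarith)]
    linarith
  calc _ < 48 * π * (1 / 382) := by gcongr; linarith
    _ < 0.4 := by linarith [pi_lt_d2]

/-- |E₂'(z)| ≤ 48π ∑_{n≥1} σ₁(n) n e^{-2πn Im z} < 0.4 for Im z ≥ 0.95. -/
theorem stmt_14 (z : ℂ) (hz : 0.95 ≤ z.im) :
    ‖deriv E₂ z‖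
      ≤ 48 * Real.pi * ∑' n : ℕ, (ArithmeticFunction.sigma 1 (n + 1) : ℝ) * ((n : ℝ) + 1) *
          Real.exp (-2 * Real.pi * ((n : ℝ) + 1) * z.im) ∧
    48 * Real.pi * ∑' n : ℕ, (ArithmeticFunction.sigma 1 (n + 1) : ℝ) * ((n : ℝ) + 1) *
        Real.exp (-2 * Real.pi * ((n : ℝ) + 1) * z.im) < 0.4 :=
  ⟨norm_deriv_E₂_le (by linarith), tsum_sigma_one_mul_exp_lt hz⟩
end
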